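/- Let K be a field and n ≥ 3 an integer, and for k ≥ 1 let R_k = K[V(T_{n,k})]. Then sdepth(R_2/I(T_{n,2})) ≤ n, and for every integer k ≥ 3, sdepth(R_k/I(T_{n,k})) ≤ n(n−1)^{k−2} + sdepth(R_{k−3}/I(T_{n,k−3})) (where T_{n,0} is a single vertex and I(T_{n,0}) := (0), so sdepth(R_0/I(T_{n,0})) = 1). -/

import Mathlib

open MvPolynomial

/-- Level sizes of the perfect semiregular tree `T_{n,k}`. -/
def semiLevel (n : ℕ) : ℕ → ℕ
  | 0 => 1
  | a + 1 => n * (n - 1) ^ a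

/-- Vertices of the perfect semiregular tree `T_{n,k}`. -/
abbrev SemiVert (n k : ℕ) : Type := Σ a : Fin (k + 1), Fin (semiLevel n (a : ℕ))

/-- The perfect semiregular tree `T_{n,k}`: every internal (non-pendant) vertex has degree
`n` and every pendant vertex is at distance `k` from the root.  The vertex `j` at level
`a+1` is a child of vertex `j/(n-1)` at level `a` (of the root when `a = 0`). -/
def semiTree (n k : ℕ) : SimpleGraph (SemiVert n k) :=
  SimpleGraph.fromRel (fun v w =>
    (v.1 : ℕ) + 1 = (w.1 : ℕ) ∧ ((v.1 : ℕ) = 0 ∨ (v.2 : ℕ) = (w.2 : ℕ) / (n - 1)))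

/-- The edge ideal `I(G)` of a graph `G`, inside the polynomial ring over `K`
with variables the vertices of `G`. -/
noncomputable def edgeIdeal (K : Type) [Field K] {V : Type} (G : SimpleGraph V) :
    Ideal (MvPolynomial V K) :=
  Ideal.span {p | ∃ v w, G.Adj v w ∧ p = X v * X w}

/-- The Stanley space `u·K[Z]` inside `S/I`, spanned over `K` by the images of the
monomials `x^u · x^f` with `support f ⊆ Z`. -/
noncomputable def stanleySpace (K : Type) [Field K] {V : Type}
    (I : Ideal (MvPolynomial V K)) (u : V →₀ ℕ) (Z : Set V) :
    Submodule K (MvPolynomial V K ⧸ I) :=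
  Submodule.span K {m | ∃ f : V →₀ ℕ, (f.support : Set V) ⊆ Z ∧
    m = Ideal.Quotient.mk I (monomial (u + f) (1 : K))}

/-- A Stanley decomposition of `S/I`: a finite family of Stanley spaces `u_j·K[Z_j]`,
each of them free (that is, the monomial multiples of `u_j` are `K`-linearly independent),
whose internal direct sum as `K`-vector spaces is all of `S/I`. -/
def IsStanleyDecomp (K : Type) [Field K] {V : Type} (I : Ideal (MvPolynomial V K))
    (r : ℕ) (u : Fin r → (V →₀ ℕ)) (Z : Fin r → Finset V) : Prop :=
  DirectSum.IsInternal (fun j : Fin r => stanleySpace K I (u j) (Z j : Set V)) ∧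
  ∀ j : Fin r, LinearIndependent K
    (fun f : {f : V →₀ ℕ // (f.support : Set V) ⊆ (Z j : Set V)} =>
      Ideal.Quotient.mk I (monomial (u j + f.1) (1 : K)))

/-- The Stanley depth of `S/I`: the largest `d` such that there is a Stanley decomposition
all of whose Stanley spaces `u_j·K[Z_j]` satisfy `|Z_j| ≥ d`. -/
noncomputable def quotSdepth (K : Type) [Field K] (V : Type)
    (I : Ideal (MvPolynomial V K)) : ℕ :=
  sSup {d | ∃ (r : ℕ) (u : Fin r → (V →₀ ℕ)) (Z : Fin r → Finset V),
    IsStanleyDecomp K I r u Z ∧ ∀ j, d ≤ (Z j).card}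

/-! The classes of the monomials `x^e` whose support is an independent set of `G` form a
`K`-basis of `S/I(G)`, so a Stanley decomposition of `S/I(G)` is the same thing as a partition
of these exponent vectors into cones `u + ℕ^Z`.

Take such a partition for `T_{n,k}` and let `L` be level `k - 1`: it is independent, has no
edges to the levels `≤ k - 3` (a copy of `T_{n,k-3}`), and dominates levels `k - 2` and `k`.
For `w` supported on the copy, `w + 1_L` has independent support exactly when `w` does. A cone
`u + ℕ^Z` containing some `w + 1_L` has `Z` inside the copy and `L`, since adding a variable of
level `k - 2` or `k` would create an edge with `L`. Intersecting these cones with the copy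
therefore gives a partition for `T_{n,k-3}` whose cones lose at most `|L| = n(n-1)^(k-2)`
variables. For `k = 2` the same argument works with an empty copy. -/

section LinearAlgebra

variable {K M ι κ : Type*} [Field K] [AddCommGroup M] [Module K M] {v : ι → M} {s : Set ι}
  {T : κ → Set ι}

open Submodule Function

theorem LinearIndepOn.iSupIndep_span_image_iff (hv : LinearIndepOn K v s) (hT : ∀ k, T k ⊆ s) :
    iSupIndep (fun k => span K (v '' T k)) ↔ Pairwise (Disjoint on T) := by
  constructor
  · intro hind i j hij
    refine Set.disjoint_left.2 fun x hxi hxj => ?_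
    have hx : v x ∈ span K (v '' T i) ⊓ span K (v '' T j) :=
      ⟨subset_span ⟨x, hxi, rfl⟩, subset_span ⟨x, hxj, rfl⟩⟩
    rw [(hind.pairwiseDisjoint hij).eq_bot, mem_bot] at hx
    exact hv.ne_zero (hT i hxi) hx
  · intro hdisj
    refine iSupIndep_def.2 fun i => ?_
    have hU : Disjoint (T i) (⋃ (j) (_ : j ≠ i), T j) := by
      simp only [Set.disjoint_iUnion_right]
      exact fun j hji => hdisj hji.symm
    have hsub : T i ∪ ⋃ (j) (_ : j ≠ i), T j ⊆ s :=
      Set.union_subset (hT i) (Set.iUnion₂_subset fun j _ => hT j)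
    have := ((linearIndepOn_union_iff hU).1 (hv.mono hsub)).2.2
    rwa [Set.image_iUnion₂, span_iUnion₂] at this

theorem LinearIndepOn.iSup_span_image_eq_top_iff (hv : LinearIndepOn K v s) (hT : ∀ k, T k ⊆ s)
    (hs : span K (v '' s) = ⊤) :
    ⨆ k, span K (v '' T k) = ⊤ ↔ s ⊆ ⋃ k, T k := by
  rw [iSup_span, ← Set.image_iUnion]
  constructor
  · intro htop x hx
    have hxU : v x ∈ span K (v '' ⋃ k, T k) := htop ▸ mem_top
    exact ((hv.mono (Set.iUnion_subset hT)).mem_span_iff.1 hxU)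
      (hv.mono (Set.insert_subset hx (Set.iUnion_subset hT)))
  · intro hsU
    exact eq_top_iff.2 (hs ▸ span_mono (Set.image_mono hsU))

end LinearAlgebra

section Monomials

variable {K : Type} [Field K] {V : Type} (G : SimpleGraph V)

theorem Finsupp.single_add_single_le_iff {v w : V} (hvw : v ≠ w) (e : V →₀ ℕ) :
    Finsupp.single v 1 + Finsupp.single w 1 ≤ e ↔ v ∈ e.support ∧ w ∈ e.support := by
  classical
  simp only [Finsupp.le_def, Finsupp.add_apply, Finsupp.single_apply, Finsupp.mem_support_iff]
  constructor
  · intro h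
    have hv := h v
    have hw := h w
    simp only [if_true, if_neg hvw, if_neg hvw.symm] at hv hw
    omega
  · rintro ⟨hv, hw⟩ x
    split_ifs <;> subst_vars <;> first | omega | exact absurd rfl hvw

theorem edgeIdeal_eq_span_monomial :
    edgeIdeal K G = Ideal.span ((fun s => monomial s (1 : K)) ''
      {s | ∃ v w, G.Adj v w ∧ s = Finsupp.single v 1 + Finsupp.single w 1}) := by
  refine congrArg Ideal.span (Set.ext fun p => ⟨?_, ?_⟩)
  · rintro ⟨v, w, h, rfl⟩
    exact ⟨_, ⟨v, w, h, rfl⟩, by simp [X, monomial_mul]⟩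
  · rintro ⟨s, ⟨v, w, h, rfl⟩, rfl⟩
    exact ⟨v, w, h, by simp [X, monomial_mul]⟩

theorem mem_edgeIdeal_iff (p : MvPolynomial V K) :
    p ∈ edgeIdeal K G ↔ ∀ e ∈ p.support, ¬ G.IsIndepSet ↑e.support := by
  rw [edgeIdeal_eq_span_monomial, mem_ideal_span_monomial_image]
  refine forall₂_congr fun e _ => ?_
  simp only [SimpleGraph.isIndepSet_iff, Set.Pairwise, not_forall, not_not, Finset.mem_coe]
  constructor
  · rintro ⟨_, ⟨v, w, h, rfl⟩, hle⟩
    obtain ⟨hv, hw⟩ := (Finsupp.single_add_single_le_iff h.ne e).1 hle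
    exact ⟨v, hv, w, hw, h.ne, h⟩
  · rintro ⟨v, hv, w, hw, -, h⟩
    exact ⟨_, ⟨v, w, h, rfl⟩, (Finsupp.single_add_single_le_iff h.ne e).2 ⟨hv, hw⟩⟩

theorem monomial_mem_edgeIdeal_iff (e : V →₀ ℕ) :
    monomial e (1 : K) ∈ edgeIdeal K G ↔ ¬ G.IsIndepSet ↑e.support := by
  classical
  simp [mem_edgeIdeal_iff, support_monomial]

noncomputable def quotMonomial (I : Ideal (MvPolynomial V K)) (e : V →₀ ℕ) :
    MvPolynomial V K ⧸ I :=
  Ideal.Quotient.mk I (monomial e 1)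

theorem quotMonomial_def (I : Ideal (MvPolynomial V K)) (e : V →₀ ℕ) :
    quotMonomial I e = Ideal.Quotient.mk I (monomial e 1) :=
  rfl

theorem quotMonomial_eq_zero_iff (e : V →₀ ℕ) :
    quotMonomial (edgeIdeal K G) e = 0 ↔ ¬ G.IsIndepSet ↑e.support := by
  rw [quotMonomial, Ideal.Quotient.eq_zero_iff_mem, monomial_mem_edgeIdeal_iff]

variable (K) in
theorem linearIndepOn_quotMonomial :
    LinearIndepOn K (quotMonomial (edgeIdeal K G)) {e | G.IsIndepSet ↑e.support} := by
  have hmono := (basisMonomials V K).linearIndependent.linearIndepOn {e | G.IsIndepSet ↑e.support}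
  rw [coe_basisMonomials] at hmono
  refine hmono.map_injOn (Ideal.Quotient.mkₐ K (edgeIdeal K G)).toLinearMap
    (LinearMap.injOn_of_disjoint_ker (restrictSupport_eq_span K _).ge ?_)
  refine Submodule.disjoint_def.2 fun p hp hker => ?_
  have hbad := (mem_edgeIdeal_iff G p).1 (Ideal.Quotient.eq_zero_iff_mem.1 hker)
  rw [← support_eq_empty, Finset.eq_empty_iff_forall_notMem]
  exact fun e he => hbad e he ((mem_restrictSupport_iff K).1 hp he)

variable (K) in
theorem span_quotMonomial_eq_top :
    Submodule.span K (quotMonomial (edgeIdeal K G) '' {e | G.IsIndepSet ↑e.support}) = ⊤ := by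
  rw [eq_top_iff]
  rintro x -
  obtain ⟨p, rfl⟩ := Ideal.Quotient.mkₐ_surjective K (edgeIdeal K G) x
  induction p using MvPolynomial.induction_on' with
  | monomial e a =>
    rw [← mul_one a, ← smul_eq_mul, ← smul_monomial, map_smul]
    refine Submodule.smul_mem _ a ?_
    by_cases he : G.IsIndepSet ↑e.support
    · exact Submodule.subset_span ⟨e, he, rfl⟩
    · rw [Ideal.Quotient.mkₐ_eq_mk, ← quotMonomial, (quotMonomial_eq_zero_iff G e).2 he]
      exact Submodule.zero_mem _
  | add p q hp hq => rw [map_add]; exact Submodule.add_mem _ hp hq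

end Monomials

section StanleyDecomp

variable {K : Type} [Field K] {V : Type}

def stanleyCone (u : V →₀ ℕ) (Z : Set V) : Set (V →₀ ℕ) :=
  {e | ∃ f : V →₀ ℕ, ↑f.support ⊆ Z ∧ e = u + f}

theorem stanleySpace_eq_span (I : Ideal (MvPolynomial V K)) (u : V →₀ ℕ) (Z : Set V) :
    stanleySpace K I u Z = Submodule.span K (quotMonomial I '' stanleyCone u Z) := by
  refine congrArg (Submodule.span K) (Set.ext fun m => ⟨?_, ?_⟩)
  · rintro ⟨f, hf, rfl⟩
    exact ⟨u + f, ⟨f, hf, rfl⟩, rfl⟩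
  · rintro ⟨_, ⟨f, hf, rfl⟩, rfl⟩
    exact ⟨f, hf, rfl⟩

variable (G : SimpleGraph V)

theorem linearIndependent_quotMonomial_add_iff (u : V →₀ ℕ) (Z : Set V) :
    LinearIndependent K (fun f : {f : V →₀ ℕ // ↑f.support ⊆ Z} =>
      quotMonomial (edgeIdeal K G) (u + f.1)) ↔
    stanleyCone u Z ⊆ {e | G.IsIndepSet ↑e.support} := by
  constructor
  · rintro hli _ ⟨f, hf, rfl⟩
    show G.IsIndepSet _
    by_contra hbad
    exact hli.ne_zero ⟨f, hf⟩ ((quotMonomial_eq_zero_iff G _).2 hbad)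
  · intro hcone
    let toCone : {f : V →₀ ℕ // ↑f.support ⊆ Z} → stanleyCone u Z :=
      fun f => ⟨u + f.1, f.1, f.2, rfl⟩
    have hinj : Function.Injective toCone := fun f g hfg =>
      Subtype.ext (add_left_cancel (congrArg Subtype.val hfg))
    exact ((linearIndepOn_quotMonomial K G).mono hcone).comp toCone hinj

open Function in
def IsStanleyPartition {ι : Type*} (u : ι → V →₀ ℕ) (Z : ι → Set V) : Prop :=
  (⋃ i, stanleyCone (u i) (Z i)) = {e | G.IsIndepSet ↑e.support} ∧
    Pairwise (Disjoint on fun i => stanleyCone (u i) (Z i))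

theorem isStanleyDecomp_edgeIdeal_iff {r : ℕ} {u : Fin r → (V →₀ ℕ)} {Z : Fin r → Finset V} :
    IsStanleyDecomp K (edgeIdeal K G) r u Z ↔ IsStanleyPartition G u (fun j => Z j) := by
  simp only [IsStanleyDecomp, IsStanleyPartition, stanleySpace_eq_span, ← quotMonomial_def,
    linearIndependent_quotMonomial_add_iff,
    DirectSum.isInternal_submodule_iff_iSupIndep_and_iSup_eq_top]
  have hli := linearIndepOn_quotMonomial K G
  have hspan := span_quotMonomial_eq_top K G
  constructor
  · rintro ⟨⟨hind, htop⟩, hcone⟩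
    exact ⟨(Set.iUnion_subset hcone).antisymm
      ((hli.iSup_span_image_eq_top_iff hcone hspan).1 htop),
      (hli.iSupIndep_span_image_iff hcone).1 hind⟩
  · rintro ⟨hcover, hdisj⟩
    have hcone : ∀ j, stanleyCone (u j) (Z j) ⊆ {e | G.IsIndepSet ↑e.support} :=
      fun j => hcover ▸ Set.subset_iUnion (fun j => stanleyCone (u j) (Z j)) j
    exact ⟨⟨(hli.iSupIndep_span_image_iff hcone).2 hdisj,
      (hli.iSup_span_image_eq_top_iff hcone hspan).2 hcover.ge⟩, hcone⟩

variable {G}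

theorem IsStanleyPartition.stanleyCone_subset {ι : Type*} {u : ι → V →₀ ℕ} {Z : ι → Set V}
    (h : IsStanleyPartition G u Z) (i : ι) :
    stanleyCone (u i) (Z i) ⊆ {e | G.IsIndepSet ↑e.support} :=
  h.1 ▸ Set.subset_iUnion (fun i => stanleyCone (u i) (Z i)) i

theorem IsStanleyPartition.exists_mem_stanleyCone {ι : Type*} {u : ι → V →₀ ℕ} {Z : ι → Set V}
    (h : IsStanleyPartition G u Z) {e : V →₀ ℕ} (he : G.IsIndepSet ↑e.support) :
    ∃ i, e ∈ stanleyCone (u i) (Z i) :=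
  Set.mem_iUnion.1 (h.1.symm ▸ he)

end StanleyDecomp

section Sdepth

variable {K : Type} [Field K] {V : Type}

theorem quotSdepth_le {I : Ideal (MvPolynomial V K)} {m : ℕ}
    (h : ∀ d r (u : Fin r → V →₀ ℕ) (Z : Fin r → Finset V),
      IsStanleyDecomp K I r u Z → (∀ j, d ≤ (Z j).card) → d ≤ m) :
    quotSdepth K V I ≤ m :=
  csSup_le' fun d ⟨r, u, Z, hdec, hd⟩ => h d r u Z hdec hd

variable [Fintype V] {G : SimpleGraph V}

theorem IsStanleyPartition.le_card {ι : Type*} {u : ι → V →₀ ℕ} {Z : ι → Finset V}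
    (h : IsStanleyPartition G u (fun i => Z i)) {d : ℕ} (hd : ∀ i, d ≤ (Z i).card) :
    d ≤ Fintype.card V := by
  obtain ⟨i, -⟩ := h.exists_mem_stanleyCone (e := 0) (by
    rw [Finsupp.support_zero, Finset.coe_empty]; exact Set.pairwise_empty _)
  exact (hd i).trans (Finset.card_le_univ _)

variable (K G) in
theorem quotSdepth_edgeIdeal_le_card : quotSdepth K V (edgeIdeal K G) ≤ Fintype.card V :=
  quotSdepth_le fun _ _ _ _ hdec hd => ((isStanleyDecomp_edgeIdeal_iff G).1 hdec).le_card hd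

variable (K) in
theorem IsStanleyPartition.le_quotSdepth {ι : Type*} [Fintype ι] {u : ι → V →₀ ℕ}
    {Z : ι → Finset V} (h : IsStanleyPartition G u (fun i => Z i)) {d : ℕ}
    (hd : ∀ i, d ≤ (Z i).card) : d ≤ quotSdepth K V (edgeIdeal K G) := by
  let σ := (Fintype.equivFin ι).symm
  have hσ : IsStanleyPartition G (u ∘ σ) (fun j => Z (σ j)) :=
    ⟨(σ.surjective.iUnion_comp fun i => stanleyCone (u i) (Z i)).trans h.1,
      fun i j hij => h.2 (σ.injective.ne hij)⟩
  refine le_csSup ⟨Fintype.card V, fun d' ⟨r, u', Z', hdec, hd'⟩ => ?_⟩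
    ⟨_, u ∘ σ, Z ∘ σ, (isStanleyDecomp_edgeIdeal_iff G).2 hσ, fun j => hd (σ j)⟩
  exact ((isStanleyDecomp_edgeIdeal_iff G).1 hdec).le_card hd'

variable (K) in
theorem quotSdepth_edgeIdeal_bot :
    quotSdepth K V (edgeIdeal K (⊥ : SimpleGraph V)) = Fintype.card V := by
  refine (quotSdepth_edgeIdeal_le_card K _).antisymm ?_
  have hpart : IsStanleyPartition (⊥ : SimpleGraph V) (fun _ : Unit => 0)
      (fun _ => ((Finset.univ : Finset V) : Set V)) := by
    refine ⟨Set.ext fun e => ⟨fun _ _ _ _ _ _ h => h, fun _ => ?_⟩, Subsingleton.pairwise⟩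
    exact Set.mem_iUnion.2 ⟨(), e, by simp, (zero_add e).symm⟩
  exact hpart.le_quotSdepth K fun _ => le_rfl

end Sdepth

section Reduction

variable {V V' : Type} {G : SimpleGraph V} {G' : SimpleGraph V'} (φ : G' ↪g G) (L : Finset V)

noncomputable def liftExp (w : V' →₀ ℕ) : V →₀ ℕ :=
  w.embDomain φ.toEmbedding + Finsupp.indicator L fun _ _ => 1

noncomputable def restrictExp (e : V →₀ ℕ) : V' →₀ ℕ :=
  e.comapDomain φ φ.injective.injOn

variable {φ L}

theorem restrictExp_apply (e : V →₀ ℕ) (x : V') : restrictExp φ e x = e (φ x) :=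
  Finsupp.comapDomain_apply ..

theorem restrictExp_add (e f : V →₀ ℕ) :
    restrictExp φ (e + f) = restrictExp φ e + restrictExp φ f := by
  ext x
  simp [restrictExp_apply]

theorem coe_support_restrictExp_subset {e : V →₀ ℕ} {Z : Set V} (he : ↑e.support ⊆ Z) :
    ↑(restrictExp φ e).support ⊆ φ ⁻¹' Z := fun x hx =>
  he (by simpa [restrictExp_apply] using hx)

theorem liftExp_apply_map (hφL : ∀ x, φ x ∉ L) (w : V' →₀ ℕ) (x : V') :
    liftExp φ L w (φ x) = w x := by
  classical
  simpa [liftExp, Finsupp.indicator_apply, hφL x] using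
    Finsupp.embDomain_apply_self φ.toEmbedding w x

theorem liftExp_apply_of_notMem_range (w : V' →₀ ℕ) {v : V} (hv : v ∉ Set.range φ) :
    liftExp φ L w v = Finsupp.indicator L (fun _ _ => 1) v := by
  simp [liftExp, Finsupp.embDomain_of_notMem_range _ _ _ hv]

theorem liftExp_apply_of_mem (hφL : ∀ x, φ x ∉ L) (w : V' →₀ ℕ) {a : V} (ha : a ∈ L) :
    liftExp φ L w a = 1 := by
  classical
  rw [liftExp_apply_of_notMem_range w fun ⟨x, hx⟩ => hφL x (hx ▸ ha),
    Finsupp.indicator_apply, dif_pos ha]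

theorem restrictExp_liftExp (hφL : ∀ x, φ x ∉ L) (w : V' →₀ ℕ) :
    restrictExp φ (liftExp φ L w) = w := by
  ext x
  rw [restrictExp_apply, liftExp_apply_map hφL]

theorem coe_support_liftExp (hφL : ∀ x, φ x ∉ L) (w : V' →₀ ℕ) :
    ↑(liftExp φ L w).support = φ '' ↑w.support ∪ ↑L := by
  classical
  ext v
  by_cases hv : v ∈ Set.range φ
  · obtain ⟨x, rfl⟩ := hv
    simp [liftExp_apply_map hφL, hφL x, φ.injective.eq_iff]
  · simp [liftExp_apply_of_notMem_range w hv, Finsupp.indicator_apply]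
    exact fun x _ hx => absurd ⟨x, hx⟩ hv

theorem isIndepSet_support_liftExp_iff (hφL : ∀ x, φ x ∉ L) (hL : G.IsIndepSet ↑L)
    (hsep : ∀ x, ∀ a ∈ L, ¬ G.Adj (φ x) a) (w : V' →₀ ℕ) :
    G.IsIndepSet ↑(liftExp φ L w).support ↔ G'.IsIndepSet ↑w.support := by
  rw [coe_support_liftExp hφL, SimpleGraph.IsIndepSet, Set.pairwise_union,
    φ.injective.injOn.pairwise_image]
  refine ⟨fun h x hx y hy hxy hadj => h.1 hx hy hxy (φ.map_adj_iff.2 hadj),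
    fun h => ⟨fun x hx y hy hxy hadj => h hx hy hxy (φ.map_adj_iff.1 hadj), hL, ?_⟩⟩
  rintro _ ⟨x, -, rfl⟩ a ha -
  exact ⟨hsep x a ha, fun hadj => hsep x a ha hadj.symm⟩

theorem subset_range_union_of_liftExp_mem_stanleyCone (hφL : ∀ x, φ x ∉ L)
    (hdom : ∀ v ∉ Set.range φ, v ∉ L → ∃ a ∈ L, G.Adj v a) {u : V →₀ ℕ} {Z : Set V}
    (hcone : stanleyCone u Z ⊆ {e | G.IsIndepSet ↑e.support}) {w : V' →₀ ℕ}
    (hw : liftExp φ L w ∈ stanleyCone u Z) :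
    Z ⊆ Set.range φ ∪ L := by
  classical
  obtain ⟨f, hf, hwf⟩ := hw
  intro z hz
  by_contra hzn
  rw [Set.mem_union, not_or] at hzn
  obtain ⟨a, ha, hadj⟩ := hdom z hzn.1 hzn.2
  have hsupp : ↑(f + Finsupp.single z 1).support ⊆ Z := fun x hx =>
    (Finset.mem_union.1 (Finsupp.support_add hx)).elim (fun h => hf h) fun h => by
      rw [Finsupp.support_single _ one_ne_zero, Finset.mem_singleton] at h
      exact h ▸ hz
  have hind := hcone ⟨_, hsupp, rfl⟩
  rw [Set.mem_ofPred_eq, ← add_assoc, ← hwf] at hind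
  refine hind ?_ ?_ hadj.ne hadj
  · simp
  · simp [liftExp_apply_of_mem hφL w ha]

theorem card_le_card_preimage_add {Z : Finset V} (hZ : ↑Z ⊆ Set.range φ ∪ ↑L) :
    Z.card ≤ (Z.preimage φ φ.injective.injOn).card + L.card := by
  classical
  calc Z.card ≤ ((Z.preimage φ φ.injective.injOn).map φ.toEmbedding ∪ L).card := by
        refine Finset.card_le_card fun v hv => ?_
        rcases hZ hv with ⟨x, rfl⟩ | hvL
        · exact Finset.mem_union_left _ (Finset.mem_map_of_mem _ (by simpa using hv))
        · exact Finset.mem_union_right _ hvL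
    _ ≤ _ := (Finset.card_union_le _ _).trans_eq (by rw [Finset.card_map])

theorem liftExp_mem_stanleyCone_iff (hφL : ∀ x, φ x ∉ L) {u : V →₀ ℕ} {Z : Set V}
    {w₀ : V' →₀ ℕ} (hw₀ : liftExp φ L w₀ ∈ stanleyCone u Z) (w : V' →₀ ℕ) :
    liftExp φ L w ∈ stanleyCone u Z ↔ w ∈ stanleyCone (restrictExp φ u) (φ ⁻¹' Z) := by
  classical
  constructor
  · rintro ⟨f, hf, h⟩
    exact ⟨restrictExp φ f, coe_support_restrictExp_subset hf,
      by rw [← restrictExp_add, ← h, restrictExp_liftExp hφL]⟩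
  · rintro ⟨f', hf', rfl⟩
    obtain ⟨f₀, hf₀, h₀⟩ := hw₀
    -- off the range of `φ`, `liftExp φ L w` and `liftExp φ L w₀ = u + f₀` agree
    refine ⟨f₀.filter (· ∉ Set.range φ) + f'.embDomain φ.toEmbedding, fun v hv => ?_, ?_⟩
    · rcases Finset.mem_union.1 (Finsupp.support_add hv) with hv | hv
      · rw [Finsupp.support_filter, Finset.mem_filter] at hv
        exact hf₀ hv.1
      · rw [Finsupp.support_embDomain, Finset.mem_map] at hv
        obtain ⟨x, hx, rfl⟩ := hv
        exact hf' hx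
    · ext v
      by_cases hv : v ∈ Set.range φ
      · obtain ⟨x, rfl⟩ := hv
        have hemb : f'.embDomain φ.toEmbedding (φ x) = f' x :=
          Finsupp.embDomain_apply_self φ.toEmbedding f' x
        rw [liftExp_apply_map hφL, Finsupp.add_apply, restrictExp_apply, Finsupp.add_apply,
          Finsupp.add_apply, Finsupp.filter_apply, if_neg (not_not.2 (Set.mem_range_self x)),
          hemb, zero_add]
      · rw [liftExp_apply_of_notMem_range _ hv, ← liftExp_apply_of_notMem_range w₀ hv, h₀,
          Finsupp.add_apply, Finsupp.add_apply, Finsupp.add_apply, Finsupp.filter_apply,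
          if_pos hv, Finsupp.embDomain_of_notMem_range _ _ _ hv, add_zero]

theorem IsStanleyPartition.restrict (hφL : ∀ x, φ x ∉ L) (hL : G.IsIndepSet ↑L)
    (hsep : ∀ x, ∀ a ∈ L, ¬ G.Adj (φ x) a) {ι : Type*} {u : ι → V →₀ ℕ} {Z : ι → Set V}
    (h : IsStanleyPartition G u Z) :
    IsStanleyPartition G'
      (fun i : {i // ∃ w, liftExp φ L w ∈ stanleyCone (u i) (Z i)} => restrictExp φ (u i))
      (fun i => φ ⁻¹' Z i) := by
  have hmem : ∀ (i : {i // ∃ w, liftExp φ L w ∈ stanleyCone (u i) (Z i)}) w,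
      liftExp φ L w ∈ stanleyCone (u i) (Z i) ↔
        w ∈ stanleyCone (restrictExp φ (u i)) (φ ⁻¹' Z i) :=
    fun i => liftExp_mem_stanleyCone_iff hφL i.2.choose_spec
  refine ⟨Set.ext fun w => ?_, fun i j hij => Set.disjoint_left.2 fun w hi hj => ?_⟩
  · simp only [Set.mem_iUnion, ← hmem, Set.mem_ofPred_eq,
      ← isIndepSet_support_liftExp_iff hφL hL hsep]
    refine ⟨fun ⟨i, hi⟩ => h.stanleyCone_subset i hi, fun hw => ?_⟩
    obtain ⟨i, hi⟩ := h.exists_mem_stanleyCone hw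
    exact ⟨⟨i, w, hi⟩, hi⟩
  · exact Set.disjoint_left.1 (h.2 (Subtype.coe_injective.ne hij)) ((hmem i w).2 hi)
      ((hmem j w).2 hj)

theorem quotSdepth_edgeIdeal_le_card_add (K : Type) [Field K] [Fintype V']
    (hφL : ∀ x, φ x ∉ L) (hL : G.IsIndepSet ↑L) (hsep : ∀ x, ∀ a ∈ L, ¬ G.Adj (φ x) a)
    (hdom : ∀ v ∉ Set.range φ, v ∉ L → ∃ a ∈ L, G.Adj v a) :
    quotSdepth K V (edgeIdeal K G) ≤ L.card + quotSdepth K V' (edgeIdeal K G') := by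
  classical
  refine quotSdepth_le fun d r u Z hdec hd => ?_
  have h := (isStanleyDecomp_edgeIdeal_iff G).1 hdec
  have hrestrict := h.restrict hφL hL hsep
  simp only [← Finset.coe_preimage _ φ.injective.injOn] at hrestrict
  have hcard : ∀ i : {i // ∃ w, liftExp φ L w ∈ stanleyCone (u i) (Z i)},
      d - L.card ≤ ((Z i).preimage φ φ.injective.injOn).card := fun i => by
    have hZ := subset_range_union_of_liftExp_mem_stanleyCone hφL hdom
      (h.stanleyCone_subset i) i.2.choose_spec
    have := card_le_card_preimage_add hZ
    have := hd i
    omega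
  have := hrestrict.le_quotSdepth K hcard
  omega

end Reduction

section SemiTree

variable {n k : ℕ}

theorem SemiVert.ext' {v w : SemiVert n k} (h1 : (v.1 : ℕ) = w.1) (h2 : (v.2 : ℕ) = w.2) :
    v = w := by
  obtain ⟨⟨a, ha⟩, ⟨i, hi⟩⟩ := v
  obtain ⟨⟨b, hb⟩, ⟨j, hj⟩⟩ := w
  simp only at h1 h2
  subst h1 h2
  rfl

theorem semiTree_adj {v w : SemiVert n k} :
    (semiTree n k).Adj v w ↔ v ≠ w ∧
      (((v.1 : ℕ) + 1 = w.1 ∧ ((v.1 : ℕ) = 0 ∨ (v.2 : ℕ) = w.2 / (n - 1))) ∨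
       ((w.1 : ℕ) + 1 = v.1 ∧ ((w.1 : ℕ) = 0 ∨ (w.2 : ℕ) = v.2 / (n - 1)))) :=
  SimpleGraph.fromRel_adj ..

theorem semiTree_adj_level {v w : SemiVert n k} (h : (semiTree n k).Adj v w) :
    (v.1 : ℕ) + 1 = w.1 ∨ (w.1 : ℕ) + 1 = v.1 := by
  rcases (semiTree_adj.1 h).2 with ⟨h1, _⟩ | ⟨h1, _⟩
  exacts [Or.inl h1, Or.inr h1]

theorem semiTree_adj_of_parent {v w : SemiVert n k} (h1 : (v.1 : ℕ) + 1 = w.1)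
    (h2 : (v.1 : ℕ) = 0 ∨ (v.2 : ℕ) = w.2 / (n - 1)) : (semiTree n k).Adj v w :=
  semiTree_adj.2 ⟨fun h => by subst h; omega, Or.inl ⟨h1, h2⟩⟩

theorem exists_semiTree_adj_parent (hn : 2 ≤ n) {a : ℕ} (v : SemiVert n k)
    (hv : (v.1 : ℕ) = a + 1) :
    ∃ w, (semiTree n k).Adj w v ∧ (w.1 : ℕ) = a := by
  have hlt : a < k + 1 := by omega
  rcases a with _ | b
  · exact ⟨⟨⟨0, hlt⟩, ⟨0, by simp [semiLevel]⟩⟩,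
      semiTree_adj_of_parent hv.symm (Or.inl rfl), rfl⟩
  · have hi : (v.2 : ℕ) / (n - 1) < semiLevel n (b + 1) := by
      have := v.2.2
      simp only [hv, semiLevel] at this ⊢
      rw [Nat.div_lt_iff_lt_mul (by omega), mul_assoc, ← pow_succ]
      exact this
    exact ⟨⟨⟨b + 1, hlt⟩, ⟨_, hi⟩⟩, semiTree_adj_of_parent hv.symm (Or.inr rfl), rfl⟩

theorem exists_semiTree_adj_child (hn : 2 ≤ n) (v : SemiVert n k) (hv : (v.1 : ℕ) < k) :
    ∃ w, (semiTree n k).Adj v w ∧ (w.1 : ℕ) = v.1 + 1 := by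
  have hlt : (v.1 : ℕ) + 1 < k + 1 := by omega
  by_cases h0 : (v.1 : ℕ) = 0
  · exact ⟨⟨⟨v.1 + 1, hlt⟩, ⟨0, by simp [h0, semiLevel]; omega⟩⟩,
      semiTree_adj_of_parent rfl (Or.inl h0), rfl⟩
  · obtain ⟨b, hb⟩ : ∃ b, (v.1 : ℕ) = b + 1 := ⟨v.1 - 1, by omega⟩
    have hi : (v.2 : ℕ) * (n - 1) < semiLevel n (v.1 + 1) := by
      have := v.2.2
      simp only [hb, semiLevel] at this ⊢
      rw [pow_succ, ← mul_assoc]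
      exact Nat.mul_lt_mul_of_pos_right this (by omega)
    exact ⟨⟨⟨v.1 + 1, hlt⟩, ⟨_, hi⟩⟩,
      semiTree_adj_of_parent rfl (Or.inr (Nat.mul_div_cancel _ (by omega)).symm), rfl⟩

def semiTreeTrunc {m : ℕ} (hmk : m ≤ k) : semiTree n m ↪g semiTree n k where
  toFun v := ⟨⟨v.1, by omega⟩, ⟨v.2, v.2.2⟩⟩
  inj' v w h := SemiVert.ext' (congrArg (fun x : SemiVert n k => (x.1 : ℕ)) h)
    (congrArg (fun x : SemiVert n k => (x.2 : ℕ)) h)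
  map_rel_iff' {v w} := by
    rw [semiTree_adj, semiTree_adj]
    refine and_congr (not_congr ⟨fun h => SemiVert.ext' ?_ ?_, fun h => h ▸ rfl⟩) Iff.rfl
    exacts [congrArg (fun x : SemiVert n k => (x.1 : ℕ)) h,
      congrArg (fun x : SemiVert n k => (x.2 : ℕ)) h]

theorem mem_range_semiTreeTrunc {m : ℕ} (hmk : m ≤ k) (v : SemiVert n k) :
    v ∈ Set.range (semiTreeTrunc (n := n) hmk) ↔ (v.1 : ℕ) ≤ m := by
  constructor
  · rintro ⟨x, rfl⟩
    exact Nat.lt_succ_iff.1 x.1.2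
  · intro hv
    exact ⟨⟨⟨v.1, by omega⟩, ⟨v.2, v.2.2⟩⟩, SemiVert.ext' rfl rfl⟩

theorem card_semiTree_level {a : ℕ} (ha : a ≤ k) :
    (Finset.univ.filter fun v : SemiVert n k => (v.1 : ℕ) = a).card = semiLevel n a := by
  rw [← Fintype.card_fin (semiLevel n a), ← Finset.card_univ]
  refine (Finset.card_bij (fun i _ => (⟨⟨a, by omega⟩, i⟩ : SemiVert n k)) (by simp)
    (fun i _ j _ h => eq_of_heq (Sigma.mk.inj h).2) fun v hv => ?_).symm
  rw [Finset.mem_filter] at hv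
  exact ⟨⟨v.2, hv.2 ▸ v.2.2⟩, Finset.mem_univ _, SemiVert.ext' hv.2.symm rfl⟩

theorem isIndepSet_semiTree_level (a : ℕ) :
    (semiTree n k).IsIndepSet {v | (v.1 : ℕ) = a} := fun v hv w hw _ hadj => by
  rcases semiTree_adj_level hadj with h | h <;> simp_all

-- `(v.1 : ℕ) + 3 ≤ k` rather than `≤ k - 3`: for `k = 2` the copy of `T_{n,k-3}` must be empty.
theorem quotSdepth_semiTree_le_add (K : Type) [Field K] (hn : 2 ≤ n) (hk : 2 ≤ k)
    {V' : Type} [Fintype V'] {G' : SimpleGraph V'} (φ : G' ↪g semiTree n k)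
    (hφ : ∀ v, v ∈ Set.range φ ↔ (v.1 : ℕ) + 3 ≤ k) :
    quotSdepth K (SemiVert n k) (edgeIdeal K (semiTree n k)) ≤
      n * (n - 1) ^ (k - 2) + quotSdepth K V' (edgeIdeal K G') := by
  classical
  set L := Finset.univ.filter fun v : SemiVert n k => (v.1 : ℕ) = k - 1
  have hmemL : ∀ v, v ∈ L ↔ (v.1 : ℕ) = k - 1 := by simp [L]
  have hcard : L.card = n * (n - 1) ^ (k - 2) := by
    rw [card_semiTree_level (by omega)]
    obtain ⟨b, rfl⟩ : ∃ b, k = b + 2 := ⟨k - 2, by omega⟩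
    rfl
  rw [← hcard]
  refine quotSdepth_edgeIdeal_le_card_add K (φ := φ) (L := L) ?_ ?_ ?_ ?_
  · intro x hx
    have := (hφ _).1 ⟨x, rfl⟩
    rw [hmemL] at hx
    omega
  · simpa [L] using isIndepSet_semiTree_level (n := n) (k := k) (k - 1)
  · intro x a ha hadj
    have := (hφ _).1 ⟨x, rfl⟩
    rw [hmemL] at ha
    rcases semiTree_adj_level hadj with h | h <;> omega
  · intro v hv hvL
    rw [hφ] at hv
    rw [hmemL] at hvL
    have hlt := v.1.2
    by_cases hvk : (v.1 : ℕ) = k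
    · obtain ⟨a, hadj, ha⟩ := exists_semiTree_adj_parent hn v (a := k - 1) (by omega)
      exact ⟨a, (hmemL a).2 ha, hadj.symm⟩
    · obtain ⟨a, hadj, ha⟩ := exists_semiTree_adj_child hn v (by omega)
      exact ⟨a, (hmemL a).2 (by omega), hadj⟩

end SemiTree

theorem sdepth_semiTree_recursive (K : Type) [Field K] (n : ℕ) (hn : 3 ≤ n) :
    quotSdepth K (SemiVert n 2) (edgeIdeal K (semiTree n 2)) ≤ n ∧
    (∀ k : ℕ, 3 ≤ k →
      quotSdepth K (SemiVert n k) (edgeIdeal K (semiTree n k)) ≤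
        n * (n - 1) ^ (k - 2) +
          quotSdepth K (SemiVert n (k - 3)) (edgeIdeal K (semiTree n (k - 3)))) ∧
    quotSdepth K (SemiVert n 0) (edgeIdeal K (semiTree n 0)) = 1 := by
  have hn2 : 2 ≤ n := by omega
  refine ⟨?_, fun k hk => ?_, ?_⟩
  · let φ : (⊥ : SimpleGraph Empty) ↪g semiTree n 2 :=
      ⟨Function.Embedding.ofIsEmpty, fun {a} => isEmptyElim a⟩
    have hle := quotSdepth_semiTree_le_add K hn2 le_rfl φ fun v => by
      simp only [Set.range_eq_empty, Set.mem_empty_iff_false, false_iff]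
      omega
    have hempty := quotSdepth_edgeIdeal_le_card K (⊥ : SimpleGraph Empty)
    simp only [Fintype.card_of_isEmpty, nonpos_iff_eq_zero] at hempty
    simpa [hempty] using hle
  · exact quotSdepth_semiTree_le_add K hn2 (by omega) (semiTreeTrunc (by omega)) fun v => by
      rw [mem_range_semiTreeTrunc]
      omega
  · have hcard : Fintype.card (SemiVert n 0) = 1 := by simp [Fintype.card_sigma, semiLevel]
    have : Subsingleton (SemiVert n 0) := Fintype.card_le_one_iff_subsingleton.1 hcard.le
    rw [Subsingleton.elim (semiTree n 0) ⊥, quotSdepth_edgeIdeal_bot K, hcard]
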